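/- arXiv:2008.02541 — 5 statements merged into one kernel-verified Lean document; each statement's English description precedes it below -/
import Mathlib

section
/- For every prime p > 3, the sum over k from 0 to p-1 of binom(2k,k)^2 / 16^k is congruent to (-1)^((p-1)/2) modulo p^2 (i.e., to the Legendre symbol (-1/p)). -/
/-!
Write `p = 2a + 1` and `m = a p + a = (p² - 1) / 2`, so that `m ≡ -1/2` modulo `p²` and
`C(2k, k) ≡ (-4)^k C(m, k)`; the sum becomes `∑_{k<p} C(m, k)²`. By Lucas,
`C(m, k) ≡ C(a, k)` modulo `p`, hence `C(m, k)² ≡ 2 C(m, k) C(a, k) - C(a, k)²` modulo `p²`,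
and Vandermonde turns the sum into `2 C(m + a, a) - C(2a, a)`. Finally
`a! C(t p - 1, a) = ∏_{i<a} (t p - i - 1)` is affine in `t` modulo `p²`; with
`m + a = (a + 1) p - 1` and `2a = p - 1`, the combination above is its value at
`t = 2a + 1 = p`, and `∏_{i<a} (p² - i - 1) ≡ (-1)^a a!`.
-/

open Finset Nat

theorem exists_forall_prod_add_mul_eq {ι R : Type*} [CommRing R] {ε : R} (hε : ε * ε = 0)
    (s : Finset ι) (u : ι → R) :
    ∃ w : R, ∀ t : R, ∏ i ∈ s, (u i + t * ε) = ∏ i ∈ s, u i + t * ε * w := by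
  induction s using Finset.cons_induction with
  | empty => exact ⟨0, fun t => by simp⟩
  | cons j s hj ih =>
    obtain ⟨w, hw⟩ := ih
    refine ⟨u j * w + ∏ i ∈ s, u i, fun t => ?_⟩
    rw [prod_cons, prod_cons, hw]
    linear_combination t ^ 2 * w * hε

theorem natCast_choose_two_mul_eq_neg_four_pow_mul {R : Type*} [CommRing R] {m : ℕ}
    (hm : 2 * (m : R) + 1 = 0) {k : ℕ} (hk : k ≤ m) (hunit : IsUnit (k ! : R)) :
    ((2 * k).choose k : R) = (-4) ^ k * m.choose k := by
  induction k with
  | zero => simp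
  | succ k ih =>
    rw [factorial_succ, cast_mul, cast_succ, IsUnit.mul_iff] at hunit
    have hcentral := congrArg (Nat.cast : ℕ → R) (succ_mul_centralBinom_succ k)
    have hchoose := congrArg (Nat.cast : ℕ → R) (choose_succ_right_eq m k)
    simp only [centralBinom_eq_two_mul_choose, cast_mul, cast_add, cast_ofNat, cast_one,
      cast_sub (show k ≤ m by omega)] at hcentral hchoose
    refine hunit.1.mul_left_cancel ?_
    linear_combination hcentral - (-4) ^ (k + 1) * hchoose
      + 2 * (2 * (k : R) + 1) * ih (by omega) hunit.2 + 2 * (-4) ^ k * (m.choose k : R) * hm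

theorem exists_forall_natCast_choose_mul_sub_one_eq {R : Type*} [CommRing R] {p a : ℕ}
    (hp : (p : R) * p = 0) (ha : IsUnit (a ! : R)) :
    ∃ w : R, ∀ t : ℕ, a < t * p → ((t * p - 1).choose a : R) = (-1) ^ a + t * p * w := by
  obtain ⟨w, hw⟩ := exists_forall_prod_add_mul_eq hp (range a) (fun i => -((i : R) + 1))
  simp only [prod_neg, card_range] at hw
  have hdesc : ∀ t : ℕ, a < t * p →
      (a ! : R) * (t * p - 1).choose a = (-1) ^ a * a ! + t * p * w := by
    intro t ht
    rw [← cast_mul, ← descFactorial_eq_factorial_mul_choose, descFactorial_eq_prod_range,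
      cast_prod, ← prod_range_add_one_eq_factorial, cast_prod]
    push_cast
    rw [← hw]
    refine prod_congr rfl fun i hi => ?_
    rw [mem_range] at hi
    rw [cast_sub (by omega), cast_sub (by omega)]
    push_cast
    ring
  obtain ⟨u, hu⟩ := ha
  refine ⟨↑u⁻¹ * w, fun t ht => ?_⟩
  have h := hdesc t ht
  rw [← hu] at h
  linear_combination (↑u⁻¹ : R) * h + ((-1) ^ a - ((t * p - 1).choose a : R)) * Units.inv_mul u

theorem ZMod.natCast_sq_eq_of_modEq {n x y : ℕ} (h : x ≡ y [MOD n]) :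
    (x : ZMod (n ^ 2)) ^ 2 = 2 * x * y - y ^ 2 := by
  have hdvd : ((n ^ 2 : ℕ) : ℤ) ∣ ((x : ℤ) - y) ^ 2 := by
    push_cast
    exact pow_dvd_pow_of_dvd ((Nat.modEq_iff_dvd.mp h.symm)) 2
  have := (ZMod.intCast_zmod_eq_zero_iff_dvd _ _).mpr hdvd
  push_cast at this
  linear_combination this

theorem Nat.sum_range_choose_mul_choose_of_lt (m : ℕ) {a N : ℕ} (h : a < N) :
    ∑ k ∈ range N, m.choose k * a.choose k = (m + a).choose a := by
  rw [add_choose_eq, Finset.Nat.sum_antidiagonal_eq_sum_range_succ_mk]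
  rw [← sum_subset (range_subset_range.mpr h) fun k _ hk => ?_]
  · refine sum_congr rfl fun k hk => ?_
    rw [choose_symm (mem_range_succ_iff.mp hk)]
  · rw [choose_eq_zero_of_lt (n := a) (by simpa using hk), mul_zero]

theorem Nat.choose_mul_add_modEq_choose {p : ℕ} [Fact p.Prime] (b : ℕ) {a k : ℕ} (ha : a < p)
    (hk : k < p) : (b * p + a).choose k ≡ a.choose k [MOD p] := by
  have hp : 0 < p := (Fact.out : p.Prime).pos
  simpa [Nat.mul_add_mod_of_lt ha, Nat.mul_add_div hp, Nat.div_eq_of_lt ha, Nat.mod_eq_of_lt hk,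
    Nat.div_eq_of_lt hk] using
    Choose.choose_modEq_choose_mod_mul_choose_div_nat (n := b * p + a) (k := k) (p := p)

section

variable {p a : ℕ} [Fact p.Prime]

theorem ZMod.isUnit_natCast_factorial_of_lt (n : ℕ) {k : ℕ} (hk : k < p) :
    IsUnit (k ! : ZMod (p ^ n)) := by
  have hp : p.Prime := Fact.out
  refine (ZMod.isUnit_iff_coprime _ _).mpr (Nat.Coprime.pow_right n ?_)
  exact (hp.coprime_iff_not_dvd.mpr (by rw [hp.dvd_factorial]; omega)).symm

theorem natCast_choose_two_mul_sq_mul_inv_sixteen_pow (hpa : p = 2 * a + 1) {k : ℕ}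
    (hk : k < p) :
    ((2 * k).choose k : ZMod (p ^ 2)) ^ 2 * 16⁻¹ ^ k = ((a * p + a).choose k) ^ 2 := by
  have hpp : (p : ZMod (p ^ 2)) * p = 0 := by rw [← Nat.cast_mul, ← sq, ZMod.natCast_self]
  have hm : 2 * ((a * p + a : ℕ) : ZMod (p ^ 2)) + 1 = 0 := by
    have h : 2 * (a * p + a) + 1 = p * p := by subst hpa; ring
    have h := congrArg (Nat.cast : ℕ → ZMod (p ^ 2)) h
    push_cast at h ⊢
    rw [h, hpp]
  have h16 : (16 : ZMod (p ^ 2)) * 16⁻¹ = 1 := by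
    refine ZMod.mul_inv_of_unit _ ?_
    have h : Nat.Coprime (2 ^ 4) (p ^ 2) := .pow _ _ (Nat.coprime_two_left.mpr ⟨a, hpa⟩)
    simpa using (ZMod.isUnit_iff_coprime _ _).mpr h
  rw [natCast_choose_two_mul_eq_neg_four_pow_mul hm (by nlinarith)
    (ZMod.isUnit_natCast_factorial_of_lt 2 hk)]
  rw [mul_pow, ← pow_mul, mul_comm k 2, pow_mul, neg_sq, mul_right_comm, ← mul_pow]
  norm_num [h16]

theorem two_mul_choose_sub_choose_eq_neg_one_pow (hpa : p = 2 * a + 1) :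
    2 * ((a * p + a + a).choose a : ZMod (p ^ 2)) - (a + a).choose a = (-1) ^ a := by
  have hpp : (p : ZMod (p ^ 2)) * p = 0 := by rw [← Nat.cast_mul, ← sq, ZMod.natCast_self]
  obtain ⟨w, hw⟩ := exists_forall_natCast_choose_mul_sub_one_eq hpp
    (ZMod.isUnit_natCast_factorial_of_lt 2 (show a < p by omega))
  have h1 := hw 1 (by omega)
  have h2 := hw (a + 1) (by nlinarith)
  rw [show 1 * p - 1 = a + a by omega] at h1
  rw [show (a + 1) * p - 1 = a * p + a + a by subst hpa; ring_nf; omega] at h2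
  have hpa' : (p : ZMod (p ^ 2)) = 2 * a + 1 := by rw [hpa]; push_cast; ring
  push_cast at h1 h2
  rw [h1, h2]
  linear_combination w * hpp - p * w * hpa'

end

theorem rodriguez_villegas_16 (p : ℕ) (hp : p.Prime) (hp3 : 3 < p) :
    (∑ k ∈ Finset.range p,
      ((Nat.choose (2 * k) k : ZMod (p ^ 2)) ^ 2 * ((16 : ZMod (p ^ 2))⁻¹) ^ k))
      = (-1) ^ ((p - 1) / 2) := by
  have : Fact p.Prime := ⟨hp⟩
  obtain ⟨a, hpa⟩ := hp.odd_of_ne_two (by omega)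
  have hterm : ∀ k ∈ range p, ((2 * k).choose k : ZMod (p ^ 2)) ^ 2 * (16⁻¹) ^ k
      = 2 * (a * p + a).choose k * a.choose k - a.choose k ^ 2 := by
    intro k hk
    rw [mem_range] at hk
    rw [natCast_choose_two_mul_sq_mul_inv_sixteen_pow hpa hk]
    exact ZMod.natCast_sq_eq_of_modEq (Nat.choose_mul_add_modEq_choose a (by omega) hk)
  have hvandermonde (n : ℕ) : ∑ k ∈ range p, (n.choose k : ZMod (p ^ 2)) * a.choose k
      = (n + a).choose a := by
    exact_mod_cast congrArg (Nat.cast : ℕ → ZMod (p ^ 2))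
      (Nat.sum_range_choose_mul_choose_of_lt n (show a < p by omega))
  rw [sum_congr rfl hterm, sum_sub_distrib]
  simp only [mul_assoc, ← mul_sum, sq, hvandermonde]
  rw [show (p - 1) / 2 = a by omega, two_mul_choose_sub_choose_eq_neg_one_pow hpa]
end

section
/- For every prime p > 3, the sum over k from 0 to p-1 of binom(4k,2k)*binom(2k,k) / 64^k is congruent to the Legendre symbol (-2/p) modulo p^2. -/
/-!
For `4x = -1` one has `C(4k,2k) C(2k,k) / 64^k = (-x)_k (x+1)_k / k!²`, so the sum is `f(-1/4)`
for the polynomial `f(x) = ∑_{k<p} (-x)_k (x+1)_k / k!²` over `ℤ/p²`, a truncation of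
`₂F₁(-x, x+1; 1; 1) = P_x(-1)`. At a natural number `n < p` the series terminates, and
Chu–Vandermonde gives `f(n) = ∑_k (-1)^k C(n,k) C(n+k,k) = (-1)^n`.

Pick `r < p` with `p ∣ 4r + 1`, so that `-1/4 = r + cp`. The symmetry `f(-1-x) = f(x)` and
`r - p = -1 - (p-1-r)` give `f(r - p) = (-1)^(p-1-r) = (-1)^r = f(r)`; since `p² = 0`, first-order
Taylor expansion turns this into `p f'(r) = 0`, hence `f(r + cp) = f(r) = (-1)^r`. Finally
`(-1)^r = (-2/p)` by inspecting `p mod 8`.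
-/

open Finset Polynomial Nat

theorem alternating_sum_choose_mul_choose_add (n : ℕ) :
    ∑ k ∈ range (n + 1), (-1 : ℤ) ^ k * n.choose k * (n + k).choose k = (-1) ^ n := by
  -- `(-1)^k C(n+k, k) = C(-n-1, k)`, so the sum is Chu–Vandermonde for `C(n + (-n-1), n)`.
  have hneg : ∀ m k : ℕ, Ring.choose (-(m + 1 : ℤ)) k = (-1) ^ k * (m + k).choose k := by
    intro m k
    rw [Ring.choose_neg, show (m + 1 : ℤ) + k - 1 = ((m + k : ℕ) : ℤ) by push_cast; ring,
      Ring.choose_natCast, Units.smul_def, Int.coe_negOnePow_natCast, smul_eq_mul]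
  have hvdm := Ring.add_choose_eq (r := (n : ℤ)) (s := -(n + 1 : ℤ)) n (Commute.all _ _)
  rw [show (n : ℤ) + -(n + 1) = -((0 : ℕ) + 1) by ring, hneg,
    Nat.sum_antidiagonal_eq_sum_range_succ
      (fun i j => Ring.choose (n : ℤ) i * Ring.choose (-(n + 1 : ℤ)) j),
    ← sum_range_reflect] at hvdm
  simp only [zero_add, choose_self, Nat.cast_one, mul_one] at hvdm
  rw [hvdm]
  refine sum_congr rfl fun k hk => ?_
  have hk : k ≤ n := Nat.lt_succ_iff.mp (mem_range.mp hk)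
  rw [Nat.succ_sub_one, Nat.sub_sub_self hk, Ring.choose_natCast, hneg, Nat.choose_symm hk]
  ring

theorem Nat.factorial_four_mul (k : ℕ) :
    (4 * k)! = (2 * k)! * 4 ^ k * ∏ j ∈ range k, (4 * j + 1) * (4 * j + 3) := by
  induction k with
  | zero => simp
  | succ k ih =>
    rw [show 4 * (k + 1) = 4 * k + 3 + 1 by ring, show 2 * (k + 1) = 2 * k + 1 + 1 by ring]
    simp only [factorial_succ, prod_range_succ, pow_succ]
    rw [ih]
    ring

theorem Nat.factorial_sq_mul_choose_four_mul_mul_choose_two_mul (k : ℕ) :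
    k ! ^ 2 * (4 * k).choose (2 * k) * (2 * k).choose k
      = 4 ^ k * ∏ j ∈ range k, (4 * j + 1) * (4 * j + 3) := by
  apply Nat.eq_of_mul_eq_mul_left (2 * k).factorial_pos
  have h4 := Nat.choose_mul_factorial_mul_factorial (show 2 * k ≤ 4 * k by omega)
  have h2 := Nat.choose_mul_factorial_mul_factorial (show k ≤ 2 * k by omega)
  rw [show 4 * k - 2 * k = 2 * k by omega] at h4
  rw [show 2 * k - k = k by omega] at h2
  rw [← mul_assoc (2 * k)! (4 ^ k), ← Nat.factorial_four_mul, ← h4]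
  nth_rw 3 [← h2]
  ring

section Pochhammer

variable (R : Type*) [CommRing R]

noncomputable def pochhammerPair (k : ℕ) : R[X] :=
  (ascPochhammer R k).comp (-X) * (ascPochhammer R k).comp (X + 1)

variable {R}

theorem eval_pochhammerPair (k : ℕ) (x : R) :
    (pochhammerPair R k).eval x
      = (ascPochhammer R k).eval (-x) * (ascPochhammer R k).eval (x + 1) := by
  simp [pochhammerPair, eval_comp]

theorem eval_pochhammerPair_neg_one_sub (k : ℕ) (x : R) :
    (pochhammerPair R k).eval (-1 - x) = (pochhammerPair R k).eval x := by
  rw [eval_pochhammerPair, eval_pochhammerPair, show -(-1 - x) = x + 1 by ring,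
    show -1 - x + 1 = -x by ring, mul_comm]

theorem eval_pochhammerPair_natCast (k n : ℕ) :
    (pochhammerPair R k).eval (n : R)
      = (-1) ^ k * (k ! ^ 2 * n.choose k * (n + k).choose k : ℕ) := by
  rw [eval_pochhammerPair, ascPochhammer_eval_neg_eq_descPochhammer,
    descPochhammer_eval_eq_descFactorial, ← Nat.cast_add_one,
    ascPochhammer_nat_eq_natCast_ascFactorial, Nat.descFactorial_eq_factorial_mul_choose,
    Nat.ascFactorial_eq_factorial_mul_choose]
  push_cast
  ring

theorem sixteen_pow_mul_eval_pochhammerPair {x : R} (hx : 4 * x = -1) (k : ℕ) :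
    16 ^ k * (pochhammerPair R k).eval x = ∏ j ∈ range k, (4 * (j : R) + 1) * (4 * j + 3) := by
  induction k with
  | zero => simp [eval_pochhammerPair]
  | succ k ih =>
    rw [eval_pochhammerPair] at ih ⊢
    rw [ascPochhammer_succ_eval, ascPochhammer_succ_eval, prod_range_succ, ← ih]
    linear_combination (-(4 * x + 3) * 16 ^ k * (ascPochhammer R k).eval (-x)
      * (ascPochhammer R k).eval (x + 1)) * hx

theorem cast_factorial_sq_mul_choose_mul_choose {x : R} (hx : 4 * x = -1) (k : ℕ) :
    (k ! ^ 2 * (4 * k).choose (2 * k) * (2 * k).choose k : R)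
      = 64 ^ k * (pochhammerPair R k).eval x := by
  have h := congrArg (Nat.cast (R := R)) (Nat.factorial_sq_mul_choose_four_mul_mul_choose_two_mul k)
  push_cast at h
  rw [h, show (64 : R) = 4 * 16 by norm_num, mul_pow, mul_assoc,
    sixteen_pow_mul_eval_pochhammerPair hx]

theorem choose_mul_choose_mul_pow_eq_mul_eval_pochhammerPair {x i w : R} (hx : 4 * x = -1)
    (hi : 64 * i = 1) {k : ℕ} (hw : w * k ! ^ 2 = 1) :
    ((4 * k).choose (2 * k) * (2 * k).choose k : R) * i ^ k = w * (pochhammerPair R k).eval x := by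
  have h := cast_factorial_sq_mul_choose_mul_choose hx k
  have hik : (64 : R) ^ k * i ^ k = 1 := by rw [← mul_pow, hi, one_pow]
  linear_combination (w * i ^ k) * h
    - ((4 * k).choose (2 * k) * (2 * k).choose k * i ^ k : R) * hw
    + (w * (pochhammerPair R k).eval x) * hik

theorem Polynomial.eval_add_mul_eq_of_eval_sub_eq {f : R[X]} {a P : R} (hP : P ^ 2 = 0)
    (h : f.eval (a - P) = f.eval a) (c : R) : f.eval (a + c * P) = f.eval a := by
  have hder : f.derivative.eval a * P = 0 := by
    have := f.eval_add_of_sq_eq_zero a (-P) (by rw [neg_sq, hP])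
    rw [← sub_eq_add_neg, h] at this
    linear_combination this
  rw [f.eval_add_of_sq_eq_zero a (c * P) (by rw [mul_pow, hP, mul_zero])]
  linear_combination c * hder

noncomputable def legendreTrunc (w : ℕ → R) (N : ℕ) : R[X] :=
  ∑ k ∈ range N, C (w k) * pochhammerPair R k

theorem eval_legendreTrunc (w : ℕ → R) (N : ℕ) (x : R) :
    (legendreTrunc w N).eval x = ∑ k ∈ range N, w k * (pochhammerPair R k).eval x := by
  simp [legendreTrunc, eval_finsetSum]

theorem eval_legendreTrunc_neg_one_sub (w : ℕ → R) (N : ℕ) (x : R) :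
    (legendreTrunc w N).eval (-1 - x) = (legendreTrunc w N).eval x := by
  simp only [eval_legendreTrunc, eval_pochhammerPair_neg_one_sub]

theorem eval_legendreTrunc_natCast {w : ℕ → R} {N n : ℕ} (hw : ∀ k < N, w k * k ! ^ 2 = 1)
    (hn : n < N) : (legendreTrunc w N).eval (n : R) = (-1) ^ n := by
  have hterm : ∀ k ∈ range N, w k * (pochhammerPair R k).eval (n : R)
      = (((-1 : ℤ) ^ k * n.choose k * (n + k).choose k : ℤ) : R) := by
    intro k hk
    rw [eval_pochhammerPair_natCast]
    push_cast
    linear_combination ((-1) ^ k * (n.choose k * (n + k).choose k : R)) * hw k (mem_range.mp hk)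
  rw [eval_legendreTrunc, sum_congr rfl hterm, ← Int.cast_sum, ← sum_range_add_sum_Ico _ hn,
    alternating_sum_choose_mul_choose_add, sum_eq_zero, add_zero]
  · norm_num
  · intro k hk
    rw [Nat.choose_eq_zero_of_lt (mem_Ico.mp hk).1]
    simp

theorem eval_legendreTrunc_natCast_add_mul {w : ℕ → R} {p r : ℕ}
    (hw : ∀ k < p, w k * k ! ^ 2 = 1) (hp : Odd p) (hr : r < p) (hP : (p : R) ^ 2 = 0) (c : R) :
    (legendreTrunc w p).eval (r + c * p) = (-1) ^ r := by
  rw [eval_add_mul_eq_of_eval_sub_eq hP _ c, eval_legendreTrunc_natCast hw hr]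
  have hr' : ((r : R) - p) = -1 - ((p - 1 - r : ℕ) : R) := by
    rw [Nat.cast_sub (by omega), Nat.cast_sub (by omega)]
    push_cast; ring
  rw [hr', eval_legendreTrunc_neg_one_sub, eval_legendreTrunc_natCast hw (by omega),
    eval_legendreTrunc_natCast hw hr, neg_one_pow_eq_pow_mod_two,
    neg_one_pow_eq_pow_mod_two (n := r)]
  obtain ⟨m, rfl⟩ := hp
  congr 1
  omega

end Pochhammer

theorem exists_neg_one_pow_eq_legendreSym_neg_two {p : ℕ} [Fact p.Prime] (hp : p ≠ 2) :
    ∃ r δ : ℕ, r < p ∧ 4 * r + 1 = δ * p ∧ (-1 : ℤ) ^ r = legendreSym p (-2) := by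
  have hodd : p % 2 = 1 := Nat.odd_iff.mp ((Fact.out : p.Prime).odd_of_ne_two hp)
  rw [legendreSym.at_neg_two hp, ZMod.χ₈'_nat_eq_if_mod_eight, if_neg (by omega)]
  rcases (by omega : p % 8 = 1 ∨ p % 8 = 3 ∨ p % 8 = 5 ∨ p % 8 = 7) with h | h | h | h
  · refine ⟨p / 4, 1, by omega, by omega, ?_⟩
    rw [if_pos (by omega), Even.neg_one_pow (Nat.even_iff.mpr (by omega))]
  · refine ⟨3 * (p / 4) + 2, 3, by omega, by omega, ?_⟩
    rw [if_pos (by omega), Even.neg_one_pow (Nat.even_iff.mpr (by omega))]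
  · refine ⟨p / 4, 1, by omega, by omega, ?_⟩
    rw [if_neg (by omega), Odd.neg_one_pow (Nat.odd_iff.mpr (by omega))]
  · refine ⟨3 * (p / 4) + 2, 3, by omega, by omega, ?_⟩
    rw [if_neg (by omega), Odd.neg_one_pow (Nat.odd_iff.mpr (by omega))]

theorem rodriguez_villegas_64 (p : ℕ) (hp : p.Prime) (hp3 : 3 < p) :
    (∑ k ∈ Finset.range p,
      ((Nat.choose (4 * k) (2 * k) : ZMod (p ^ 2)) * (Nat.choose (2 * k) k : ZMod (p ^ 2)) *
        ((64 : ZMod (p ^ 2))⁻¹) ^ k))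
      = ((@legendreSym p ⟨hp⟩ (-2) : ℤ) : ZMod (p ^ 2)) := by
  have := Fact.mk hp
  have hunit : ∀ n : ℕ, ¬ p ∣ n → IsUnit (n : ZMod (p ^ 2)) := fun n =>
    (ZMod.isUnit_natCast_iff_not_dvd_pow hp two_pos).mpr
  have hpow2 : ∀ m, ¬ p ∣ 2 ^ m := fun m h => by
    have := (Nat.prime_dvd_prime_iff_eq hp Nat.prime_two).mp (hp.dvd_of_dvd_pow h); omega
  have h4 : (4 : ZMod (p ^ 2)) * 4⁻¹ = 1 :=
    ZMod.mul_inv_of_unit _ (by exact_mod_cast hunit 4 (hpow2 2))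
  have h64 : (64 : ZMod (p ^ 2)) * 64⁻¹ = 1 :=
    ZMod.mul_inv_of_unit _ (by exact_mod_cast hunit 64 (hpow2 6))
  have hw : ∀ k < p, ((k ! : ZMod (p ^ 2)) ^ 2)⁻¹ * k ! ^ 2 = 1 := fun k hk =>
    ZMod.inv_mul_of_unit _ ((hunit _ (by rw [hp.dvd_factorial]; omega)).pow 2)
  obtain ⟨r, δ, hr, hrδ, hsign⟩ :=
    exists_neg_one_pow_eq_legendreSym_neg_two (p := p) (by omega)
  have hx : 4 * (r + -δ * 4⁻¹ * p : ZMod (p ^ 2)) = -1 := by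
    have := congrArg (Nat.cast (R := ZMod (p ^ 2))) hrδ
    push_cast at this
    linear_combination (-(δ * p : ZMod (p ^ 2))) * h4 + this
  calc _ = (legendreTrunc (fun k => ((k ! : ZMod (p ^ 2)) ^ 2)⁻¹) p).eval
          (r + -δ * 4⁻¹ * p : ZMod (p ^ 2)) := by
        rw [eval_legendreTrunc]
        exact sum_congr rfl fun k hk =>
          choose_mul_choose_mul_pow_eq_mul_eval_pochhammerPair hx h64 (hw k (mem_range.mp hk))
    _ = (-1) ^ r := eval_legendreTrunc_natCast_add_mul hw (hp.odd_of_ne_two (by omega)) hr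
        (by rw [← Nat.cast_pow, ZMod.natCast_self]) _
    _ = _ := by rw [← hsign]; norm_num
end

section
/- Let m, s, n, r be positive integers with s < m, n odd, n ≡ 1 (mod m), and 1 ≤ j ≤ r. Then n^(j-1) * (⌊(n^(r-j)-1)/s⌋ * m + 1) ≤ ⌊(n^(r-1)-1)/s⌋ * m + 1. -/
theorem multiples_inequality (m s n r j : ℕ) (hs : 0 < s) (hsm : s < m) (hn : 0 < n)
    (hodd : Odd n) (hnm : (n : ℤ) ≡ 1 [ZMOD (m : ℤ)]) (hr : 0 < r)
    (hj1 : 1 ≤ j) (hjr : j ≤ r) :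
    n ^ (j - 1) * ((n ^ (r - j) - 1) / s * m + 1) ≤ (n ^ (r - 1) - 1) / s * m + 1 := by
  set a := j - 1 with ha
  set b := r - j with hb
  have hab : r - 1 = a + b := by omega
  have hpa : 1 ≤ n ^ a := Nat.one_le_pow _ _ hn
  have hpb : 1 ≤ n ^ b := Nat.one_le_pow _ _ hn
  -- m ∣ n - 1 as naturals
  have hdvd1 : (m : ℤ) ∣ (n : ℤ) - 1 := hnm.symm.dvd
  have hdvdn : m ∣ n - 1 := by
    have h := hdvd1
    zify [hn]
    exact h
  have hdvda : m ∣ n ^ a - 1 := hdvdn.trans (by simpa using Nat.sub_dvd_pow_sub_pow n 1 a)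
  obtain ⟨k, hk⟩ := hdvda
  have key : n ^ a - 1 ≤ m * ((n ^ a - 1) / s) := by
    rw [hk]
    have h1 : k ≤ m * k / s := by
      have e : k = m * k / m := (Nat.mul_div_cancel_left k (by omega)).symm
      have le : m * k / m ≤ m * k / s := Nat.div_le_div_left (le_of_lt hsm) hs
      omega
    exact Nat.mul_le_mul_left m h1
  have hq : (n ^ b - 1) / s * s ≤ n ^ b - 1 := Nat.div_mul_le_self _ _
  have hsum : n ^ (r - 1) - 1 = n ^ a * (n ^ b - 1) + (n ^ a - 1) := by
    rw [hab, pow_add, Nat.mul_sub]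
    have hle : n ^ a ≤ n ^ a * n ^ b := Nat.le_mul_of_pos_right _ (by omega)
    omega
  have h2 : s * (n ^ a * ((n ^ b - 1) / s)) + (n ^ a - 1) ≤ n ^ (r - 1) - 1 := by
    rw [hsum]
    have h : s * (n ^ a * ((n ^ b - 1) / s)) ≤ n ^ a * (n ^ b - 1) := by
      have e : s * (n ^ a * ((n ^ b - 1) / s)) = n ^ a * ((n ^ b - 1) / s * s) := by ring
      rw [e]
      exact Nat.mul_le_mul_left _ hq
    omega
  have h3 : n ^ a * ((n ^ b - 1) / s) + (n ^ a - 1) / s ≤ (n ^ (r - 1) - 1) / s := by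
    have e : n ^ a * ((n ^ b - 1) / s) + (n ^ a - 1) / s
        = (s * (n ^ a * ((n ^ b - 1) / s)) + (n ^ a - 1)) / s :=
      (Nat.mul_add_div hs _ _).symm
    rw [e]
    exact Nat.div_le_div_right h2
  have expand : n ^ a * ((n ^ b - 1) / s * m + 1)
      = n ^ a * ((n ^ b - 1) / s) * m + n ^ a := by ring
  rw [expand]
  have h4 : (n ^ a * ((n ^ b - 1) / s) + (n ^ a - 1) / s) * m ≤ (n ^ (r - 1) - 1) / s * m :=
    Nat.mul_le_mul_right m h3
  have h5 : (n ^ a * ((n ^ b - 1) / s) + (n ^ a - 1) / s) * m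
      = n ^ a * ((n ^ b - 1) / s) * m + m * ((n ^ a - 1) / s) := by ring
  omega
end

section
/- Let m, s, n, r be positive integers with s < m, n odd, n ≡ 1 (mod m), r ≥ 2, and let j be an integer with 0 ≤ j ≤ ⌊(n^(r-1)-1)/s⌋. Then the sum over k from 0 to n^r - 1 of 2*(q^(s - s n (m j + 1)); q^m)_k * (q^(m - s + s n (m j + 1)); q^m)_k * q^(mk) / ((q^m; q^m)_k^2 * (1 + q^(mk))), as a rational function of q, equals (-1)^(s j + s(n-1)/m). -/
open Finset

/-- The q-shifted factorial `(x; q)_k = (1 - x)(1 - xq)⋯(1 - xq^(k-1))`. -/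
noncomputable def qPoch {K : Type*} [Field K] (x q : K) (k : ℕ) : K :=
  ∏ i ∈ Finset.range k, (1 - x * q ^ i)

/-!
Put `Q = q^m` and `N = s n j + s(n-1)/m`. The two parameters are `Q^(-N)` and `Q^(N+1)`, so the
summand is `F(N, k) = 2 (Q^(-N);Q)_k (Q^(N+1);Q)_k Q^k / ((Q;Q)_k² (1 + Q^k))`, which vanishes
for `k > N`, and `N < n^r`. The pair `F(N, k)`, `G(N, k+1) = 2 (Q^(-N);Q)_k (Q^(N+2);Q)_k / (Q;Q)_k²`
is a WZ pair: `F(N+1, k) + F(N, k) = G(N, k+1) - G(N, k)`, an identity that holds with a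
generic parameter `a` in place of `Q^(-N)` (and `a / Q` in place of `Q^(-N-1)`). Summing over
`k` telescopes, so the complete sums satisfy `S(N+1) = -S(N)`, and `S(0) = 1`. Hence the sum is
`(-1)^N`, and `(-1)^N = (-1)^(s j + s(n-1)/m)` because `n` is odd.
-/

section

variable {K : Type*} [Field K]

theorem qPoch_zero (x q : K) : qPoch x q 0 = 1 := prod_range_zero _

theorem qPoch_succ (x q : K) (k : ℕ) :
    qPoch x q (k + 1) = qPoch x q k * (1 - x * q ^ k) := prod_range_succ _ _

theorem qPoch_succ' (x q : K) (k : ℕ) :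
    qPoch x q (k + 1) = (1 - x) * qPoch (x * q) q k := by
  simp only [qPoch, prod_range_succ', pow_zero, mul_one, pow_succ', mul_assoc, mul_comm]

theorem qPoch_eq_zero_of_mul_pow_eq_one {x q : K} {i k : ℕ} (hik : i < k) (h : x * q ^ i = 1) :
    qPoch x q k = 0 :=
  prod_eq_zero (mem_range.mpr hik) (sub_eq_zero.mpr h.symm)

theorem one_sub_pow_ne_zero {q : K} (hq : ¬IsOfFinOrder q) {i : ℕ} (hi : i ≠ 0) :
    1 - q ^ i ≠ 0 :=
  sub_ne_zero.mpr fun h => hq (isOfFinOrder_iff_pow_eq_one.mpr ⟨i, Nat.pos_of_ne_zero hi, h.symm⟩)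

theorem one_add_pow_ne_zero [NeZero (2 : K)] {q : K} (hq : ¬IsOfFinOrder q) (i : ℕ) :
    1 + q ^ i ≠ 0 := by
  rcases Nat.eq_zero_or_pos i with rfl | hi
  · simpa [one_add_one_eq_two] using two_ne_zero
  · intro h
    have hq2i : q ^ (2 * i) = 1 := by
      rw [pow_mul', eq_neg_of_add_eq_zero_right h, neg_one_sq]
    exact hq (isOfFinOrder_iff_pow_eq_one.mpr ⟨2 * i, by positivity, hq2i⟩)

theorem qPoch_self_ne_zero {q : K} (hq : ¬IsOfFinOrder q) (k : ℕ) : qPoch q q k ≠ 0 :=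
  prod_ne_zero_iff.mpr fun i _ => by
    rw [← pow_succ']
    exact one_sub_pow_ne_zero hq i.succ_ne_zero

noncomputable def qSummand (q a : K) (k : ℕ) : K :=
  2 * qPoch a q k * qPoch (q / a) q k * q ^ k / (qPoch q q k ^ 2 * (1 + q ^ k))

noncomputable def qCertificate (q a : K) : ℕ → K
  | 0 => 0
  | k + 1 => 2 * qPoch a q k * qPoch (q ^ 2 / a) q k / qPoch q q k ^ 2

theorem qSummand_div_add_qSummand [NeZero (2 : K)] {q a : K} (hq0 : q ≠ 0)
    (hq : ¬IsOfFinOrder q) (ha : a ≠ 0) (k : ℕ) :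
    qSummand q (a / q) k + qSummand q a k = qCertificate q a (k + 1) - qCertificate q a k := by
  cases k with
  | zero =>
    have h2 : (1 : K) + 1 ≠ 0 := by simpa using one_add_pow_ne_zero hq 0
    simp only [qSummand, qCertificate, qPoch_zero, pow_zero]
    field_simp
    ring
  | succ c =>
    have hP := qPoch_self_ne_zero hq c
    have hsub : 1 - q * q ^ c ≠ 0 := by
      rw [← pow_succ']
      exact one_sub_pow_ne_zero hq c.succ_ne_zero
    have hadd : 1 + q * q ^ c ≠ 0 := by
      rw [← pow_succ']
      exact one_add_pow_ne_zero hq _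
    have hshift : q / (a / q) = q ^ 2 / a := by field_simp
    simp only [qSummand, qCertificate, hshift, qPoch_succ' (a / q), div_mul_cancel₀ a hq0,
      qPoch_succ' (q / a), qPoch_succ a, qPoch_succ (q ^ 2 / a), qPoch_succ q q, pow_succ' q c]
    field_simp
    ring

theorem qSummand_one_eq_zero {q : K} {k : ℕ} (hk : k ≠ 0) : qSummand q 1 k = 0 := by
  simp [qSummand, qPoch_eq_zero_of_mul_pow_eq_one (Nat.pos_of_ne_zero hk)
    (by simp : (1 : K) * q ^ 0 = 1)]

theorem qCertificate_inv_pow_eq_zero {q : K} (hq0 : q ≠ 0) {N k : ℕ} (h : N + 1 < k) :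
    qCertificate q (q ^ N)⁻¹ k = 0 := by
  obtain ⟨c, rfl⟩ : ∃ c, k = c + 1 := ⟨k - 1, by omega⟩
  simp [qCertificate, qPoch_eq_zero_of_mul_pow_eq_one (by omega : N < c)
    (inv_mul_cancel₀ (pow_ne_zero N hq0))]

theorem sum_range_qSummand_inv_pow [NeZero (2 : K)] {q : K} (hq0 : q ≠ 0)
    (hq : ¬IsOfFinOrder q) {N M : ℕ} (hNM : N < M) :
    ∑ k ∈ range M, qSummand q (q ^ N)⁻¹ k = (-1) ^ N := by
  induction N generalizing M with
  | zero =>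
    rw [sum_eq_single_of_mem 0 (mem_range.mpr hNM) fun k _ hk => ?_]
    · simpa [qSummand, qPoch_zero, one_add_one_eq_two] using two_ne_zero
    · simpa using qSummand_one_eq_zero (q := q) hk
  | succ N ih =>
    have hwz := qSummand_div_add_qSummand hq0 hq (inv_ne_zero (pow_ne_zero N hq0))
    rw [div_eq_mul_inv, ← mul_inv, ← pow_succ] at hwz
    calc ∑ k ∈ range M, qSummand q (q ^ (N + 1))⁻¹ k
        = ∑ k ∈ range M, (qCertificate q (q ^ N)⁻¹ (k + 1) - qCertificate q (q ^ N)⁻¹ k)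
            - ∑ k ∈ range M, qSummand q (q ^ N)⁻¹ k := by
          rw [← sum_sub_distrib]
          exact sum_congr rfl fun k _ => eq_sub_of_add_eq (hwz k)
      _ = (-1) ^ (N + 1) := by
          rw [sum_range_sub, ih (by omega), qCertificate_inv_pow_eq_zero hq0 hNM]
          simp [qCertificate, pow_succ]

theorem qSummand_pow_eq (x : K) (m N k : ℕ) :
    qSummand (x ^ m) ((x ^ m) ^ N)⁻¹ k =
      2 * qPoch (x ^ (-((m * N : ℕ) : ℤ))) (x ^ (m : ℤ)) k *
        qPoch (x ^ ((m * (N + 1) : ℕ) : ℤ)) (x ^ (m : ℤ)) k * x ^ (m * k) /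
      (qPoch (x ^ (m : ℤ)) (x ^ (m : ℤ)) k ^ 2 * (1 + x ^ (m * k))) := by
  simp only [qSummand, zpow_neg, zpow_natCast, div_inv_eq_mul, ← pow_succ', pow_mul]

end

theorem RatFunc.not_isOfFinOrder_X_pow {K : Type*} [Field K] {m : ℕ} (hm : m ≠ 0) :
    ¬IsOfFinOrder ((RatFunc.X : RatFunc K) ^ m) := by
  rw [isOfFinOrder_iff_pow_eq_one]
  rintro ⟨n, hn, h⟩
  have hdeg := congrArg RatFunc.intDegree h
  rw [← pow_mul, ← RatFunc.algebraMap_X, ← map_pow, RatFunc.intDegree_polynomial,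
    RatFunc.intDegree_one, Polynomial.natDegree_X_pow, Nat.cast_eq_zero] at hdeg
  exact mul_ne_zero hm hn.ne' hdeg

theorem mul_add_lt_pow {s n r j d : ℕ} (hr : r ≠ 0) (hj : j ≤ (n ^ (r - 1) - 1) / s)
    (hd : d < n) : s * n * j + d < n ^ r := by
  have hjs : j * s ≤ n ^ (r - 1) - 1 :=
    (Nat.mul_le_mul_right s hj).trans (Nat.div_mul_le_self _ s)
  have hpow : 0 < n ^ (r - 1) := pow_pos (by omega) _
  calc s * n * j + d < n * (s * j + 1) := by nlinarith
    _ ≤ n * n ^ (r - 1) := Nat.mul_le_mul_left n (by rw [mul_comm]; omega)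
    _ = n ^ r := by rw [← pow_succ', Nat.sub_add_cancel (Nat.pos_of_ne_zero hr)]

theorem specialized_sum_evaluation_general (m s n r j : ℕ) (hsm : s < m)
    (hodd : Odd n) (hnm : (n : ℤ) ≡ 1 [ZMOD (m : ℤ)]) (hr : 2 ≤ r)
    (hj : j ≤ (n ^ (r - 1) - 1) / s) :
    (∑ k ∈ Finset.range (n ^ r),
      2 * qPoch ((RatFunc.X : RatFunc ℚ) ^ ((s : ℤ) - s * n * (m * j + 1)))
          ((RatFunc.X : RatFunc ℚ) ^ (m : ℤ)) k *
        qPoch ((RatFunc.X : RatFunc ℚ) ^ ((m : ℤ) - s + s * n * (m * j + 1)))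
          ((RatFunc.X : RatFunc ℚ) ^ (m : ℤ)) k *
        (RatFunc.X : RatFunc ℚ) ^ (m * k) /
      (qPoch ((RatFunc.X : RatFunc ℚ) ^ (m : ℤ)) ((RatFunc.X : RatFunc ℚ) ^ (m : ℤ)) k ^ 2 *
        (1 + (RatFunc.X : RatFunc ℚ) ^ (m * k))))
      = (-1) ^ (s * j + s * (n - 1) / m) := by
  have hn := hodd.pos
  set d := s * (n - 1) / m
  have hmd : m * d = s * (n - 1) := Nat.mul_div_cancel' <| Dvd.dvd.mul_left
    (Nat.dvd_of_mod_eq_zero (Nat.sub_mod_eq_zero_of_mod_eq (Int.natCast_modEq_iff.mp hnm))) s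
  have hdn : d < n :=
    (Nat.div_le_of_le_mul (Nat.mul_le_mul_right _ hsm.le)).trans_lt (by omega)
  have hmN : (m : ℤ) * (s * n * j + d) = s * n * (m * j + 1) - s := by
    have hmd' := congrArg (Nat.cast : ℕ → ℤ) hmd
    push_cast [Nat.cast_sub hn] at hmd'
    linear_combination hmd'
  have hpar : (-1 : RatFunc ℚ) ^ (s * n * j + d) = (-1) ^ (s * j + d) := by
    rw [pow_add, pow_add, mul_comm s n, mul_assoc, pow_mul, hodd.neg_one_pow]
  rw [show (s : ℤ) - s * n * (m * j + 1) = -((m * (s * n * j + d) : ℕ) : ℤ) by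
      push_cast; linear_combination hmN,
    show (m : ℤ) - s + s * n * (m * j + 1) = ((m * (s * n * j + d + 1) : ℕ) : ℤ) by
      push_cast; linear_combination -hmN]
  simp only [← qSummand_pow_eq]
  rw [sum_range_qSummand_inv_pow (pow_ne_zero m RatFunc.X_ne_zero)
      (RatFunc.not_isOfFinOrder_X_pow (by omega)) (mul_add_lt_pow (by omega) hj hdn), hpar]

theorem specialized_sum_evaluation (m s n r j : ℕ) (hs : 0 < s) (hsm : s < m) (hn : 0 < n)
    (hodd : Odd n) (hnm : (n : ℤ) ≡ 1 [ZMOD (m : ℤ)]) (hr : 2 ≤ r)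
    (hj : j ≤ (n ^ (r - 1) - 1) / s) :
    (∑ k ∈ Finset.range (n ^ r),
      2 * qPoch ((RatFunc.X : RatFunc ℚ) ^ ((s : ℤ) - s * n * (m * j + 1)))
          ((RatFunc.X : RatFunc ℚ) ^ (m : ℤ)) k *
        qPoch ((RatFunc.X : RatFunc ℚ) ^ ((m : ℤ) - s + s * n * (m * j + 1)))
          ((RatFunc.X : RatFunc ℚ) ^ (m : ℤ)) k *
        (RatFunc.X : RatFunc ℚ) ^ (m * k) /
      (qPoch ((RatFunc.X : RatFunc ℚ) ^ (m : ℤ)) ((RatFunc.X : RatFunc ℚ) ^ (m : ℤ)) k ^ 2 *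
        (1 + (RatFunc.X : RatFunc ℚ) ^ (m * k))))
      = (-1) ^ (s * j + s * (n - 1) / m) :=
  specialized_sum_evaluation_general m s n r j hsm hodd hnm hr hj
end

section
/- Let m, s, n be positive integers with s < m, n odd, n ≡ -1 (mod m), and let j ≥ 0 be an integer. Then (-1)^⟨-s/m⟩_{(mj+1) n^2} = (-1)^⟨-s/m⟩_{n^2} * (-1)^⟨-s/m⟩_{mj+1}, and both sides equal (-1)^(s n^2 j). -/
theorem residue_sign_multiplicativity (m s n j : ℕ) (hs : 0 < s) (hsm : s < m) (hn : 0 < n)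
    (hodd : Odd n) (hnm : (n : ℤ) ≡ -1 [ZMOD (m : ℤ)])
    (t1 t2 t3 : ℕ)
    (ht1 : t1 < (m * j + 1) * n ^ 2)
    (ht1c : ((m : ℤ) * t1) ≡ -(s : ℤ) [ZMOD (((m * j + 1) * n ^ 2 : ℕ) : ℤ)])
    (ht2 : t2 < n ^ 2)
    (ht2c : ((m : ℤ) * t2) ≡ -(s : ℤ) [ZMOD ((n : ℤ) ^ 2)])
    (ht3 : t3 < m * j + 1)
    (ht3c : ((m : ℤ) * t3) ≡ -(s : ℤ) [ZMOD ((m * j + 1 : ℕ) : ℤ)]) :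
    (-1 : ℤ) ^ t1 = (-1 : ℤ) ^ t2 * (-1 : ℤ) ^ t3 ∧
    (-1 : ℤ) ^ t1 = (-1 : ℤ) ^ (s * n ^ 2 * j) := by
  have hm : 0 < m := lt_trans hs hsm
  -- m ∣ n + 1
  have hdvdZ : (m : ℤ) ∣ (n : ℤ) + 1 := by
    have h := Int.ModEq.dvd hnm
    have h' : (-1 : ℤ) - n = -(n + 1) := by ring
    rw [h', dvd_neg] at h
    exact h
  have hdvdN : m ∣ n + 1 := by exact_mod_cast hdvdZ
  obtain ⟨b, hb⟩ := hdvdN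
  -- coprimality
  have hcmn : Nat.Coprime m n := by
    have h2 : Nat.gcd m n ∣ n + 1 := dvd_trans (Nat.gcd_dvd_left m n) ⟨b, hb⟩
    have h3 : Nat.gcd m n ∣ n := Nat.gcd_dvd_right m n
    have h4 := Nat.dvd_sub h2 h3
    simp only [Nat.add_sub_cancel_left] at h4
    exact Nat.dvd_one.mp h4
  have hcmj : Nat.Coprime m (m * j + 1) := by
    simpa using Nat.coprime_add_mul_left_right m 1 j
  have hcN : Nat.Coprime m ((m * j + 1) * n ^ 2) :=
    Nat.Coprime.mul_right hcmj (hcmn.pow_right 2)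
  -- uniqueness lemma
  have uniq : ∀ (N a c : ℕ), a < N → c < N → (a : ℤ) ≡ (c : ℤ) [ZMOD (N : ℤ)] → a = c := by
    intro N a c ha hc h
    have h' : (a : ℤ) % N = (c : ℤ) % N := h
    rw [Int.emod_eq_of_lt (by positivity) (by exact_mod_cast ha),
      Int.emod_eq_of_lt (by positivity) (by exact_mod_cast hc)] at h'
    exact_mod_cast h'
  -- cancellation lemma
  have cancel : ∀ (N : ℕ), 0 < N → Nat.Coprime m N → ∀ a c : ℤ,
      (m : ℤ) * a ≡ (m : ℤ) * c [ZMOD (N : ℤ)] → a ≡ c [ZMOD (N : ℤ)] := by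
    intro N hN hco a c h
    have h2 := Int.ModEq.cancel_left_div_gcd (show (0:ℤ) < N by exact_mod_cast hN) h
    have hg : Int.gcd (N : ℤ) (m : ℤ) = 1 := by
      rw [Int.gcd_natCast_natCast]; exact Nat.coprime_comm.mp hco
    rwa [hg, Nat.cast_one, Int.ediv_one] at h2
  obtain ⟨k, hk⟩ : ∃ k, k = s * (n - 1) * b := ⟨_, rfl⟩
  have hmk : (m : ℤ) * k = (s : ℤ) * ((n : ℤ) ^ 2 - 1) := by
    have hbz : (n : ℤ) + 1 = (m : ℤ) * b := by exact_mod_cast hb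
    have hn1 : ((n - 1 : ℕ) : ℤ) = (n : ℤ) - 1 := by
      have h1 : 1 ≤ n := hn
      push_cast [h1]; ring
    rw [hk]
    push_cast [hn1]
    have h2 : (n:ℤ)^2 - 1 = ((n:ℤ) - 1) * ((n:ℤ) + 1) := by ring
    rw [h2, hbz]; ring
  -- k is even
  have hkeven : Even k := by
    obtain ⟨a, ha⟩ := hodd
    have h1 : n - 1 = 2 * a := by omega
    exact ⟨s * a * b, by rw [hk, h1]; ring⟩
  -- k < n^2
  have hklt : k < n ^ 2 := by
    have h1 : (m : ℤ) * k < (m : ℤ) * n ^ 2 := by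
      rw [hmk]
      have hs' : (s : ℤ) < m := by exact_mod_cast hsm
      have hs0 : (0 : ℤ) < s := by exact_mod_cast hs
      have hn2 : (1 : ℤ) ≤ (n : ℤ) ^ 2 := by
        have : (1:ℤ) ≤ n := by exact_mod_cast hn
        nlinarith
      nlinarith
    have h3 : (k : ℤ) < (n : ℤ) ^ 2 := by
      have hm0 : (0:ℤ) < m := by exact_mod_cast hm
      exact lt_of_mul_lt_mul_left h1 (le_of_lt hm0)
    exact_mod_cast h3
  have hn2pos : 0 < n ^ 2 := by positivity
  -- t2 = k
  have ht2k : t2 = k := by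
    refine uniq (n ^ 2) t2 k ht2 hklt ?_
    have hkc : (m : ℤ) * k ≡ -(s : ℤ) [ZMOD ((n : ℤ) ^ 2)] := by
      rw [hmk]
      exact (Int.modEq_iff_dvd.mpr ⟨-s, by ring⟩)
    have h5 := ht2c.trans hkc.symm
    have hcastm : ((n : ℤ))^2 = ((n^2 : ℕ) : ℤ) := by push_cast; ring
    rw [hcastm] at h5
    exact cancel (n^2) hn2pos (hcmn.pow_right 2) _ _ h5
  -- t3 = s * j
  have ht3j : t3 = s * j := by
    have hlt : s * j < m * j + 1 := by
      have := Nat.mul_le_mul_right j (Nat.le_of_lt hsm)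
      omega
    refine uniq (m * j + 1) t3 (s * j) ht3 hlt ?_
    have hc : (m : ℤ) * ((s * j : ℕ) : ℤ) ≡ -(s : ℤ) [ZMOD ((m * j + 1 : ℕ) : ℤ)] :=
      Int.modEq_iff_dvd.mpr ⟨-s, by push_cast; ring⟩
    exact cancel (m * j + 1) (by omega) hcmj _ _ (ht3c.trans hc.symm)
  -- t1 = s * n^2 * j + k
  have ht1k : t1 = s * n ^ 2 * j + k := by
    have hlt : s * n ^ 2 * j + k < (m * j + 1) * n ^ 2 := by
      have h1 : s * n ^ 2 * j + k < (s * j + 1) * n ^ 2 := by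
        have h2 : s * n ^ 2 * j = s * j * n ^ 2 := by ring
        rw [h2]; nlinarith [hklt]
      have h2 : (s * j + 1) * n ^ 2 ≤ (m * j + 1) * n ^ 2 := by
        apply Nat.mul_le_mul_right
        have := Nat.mul_le_mul_right j (Nat.le_of_lt hsm)
        omega
      omega
    refine uniq ((m * j + 1) * n ^ 2) t1 _ ht1 hlt ?_
    have hc : (m : ℤ) * ((s * n ^ 2 * j + k : ℕ) : ℤ) ≡ -(s : ℤ)
        [ZMOD (((m * j + 1) * n ^ 2 : ℕ) : ℤ)] := by
      apply Int.modEq_iff_dvd.mpr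
      refine ⟨-s, ?_⟩
      have hcast : ((s * n ^ 2 * j + k : ℕ) : ℤ) = (s:ℤ) * (n:ℤ)^2 * (j:ℤ) + (k:ℤ) := by
        push_cast [hk]; ring
      rw [hcast, mul_add, hmk]
      push_cast
      ring
    exact cancel _ (by positivity) hcN _ _ (ht1c.trans hc.symm)
  -- conclude parities
  obtain ⟨e, he⟩ := hkeven
  obtain ⟨c, hc⟩ := (hodd.pow : Odd (n ^ 2))
  have key : ∀ a d : ℕ, (-1 : ℤ) ^ (2 * a + d) = (-1 : ℤ) ^ d := by
    intro a d; rw [pow_add, pow_mul]; norm_num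
  have hkk : k = 2 * e := by omega
  have ht1' : t1 = 2 * (s * c * j + e) + s * j := by rw [ht1k, hkk, hc]; ring
  have ht2' : t2 = 2 * e + 0 := by omega
  have hsn : s * n ^ 2 * j = 2 * (s * c * j) + s * j := by rw [hc]; ring
  constructor
  · rw [ht1', ht2', ht3j, key, key]; norm_num
  · rw [ht1', hsn, key, key]
end
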